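/- For the transposition (i j) in S_n with i < j, Kendall's τ between the identity and (i j) equals (C(n,2) − 2(2(j − i) − 1)) / C(n,2); in particular the value depends only on the width j − i. -/

import Mathlib

def concordant {n : ℕ} (σ τ : Equiv.Perm (Fin n)) : ℕ :=
  (Finset.univ.filter
    (fun p : Fin n × Fin n => p.1 < p.2 ∧ (σ p.1 < σ p.2 ↔ τ p.1 < τ p.2))).card

def discordant {n : ℕ} (σ τ : Equiv.Perm (Fin n)) : ℕ :=
  (Finset.univ.filter
    (fun p : Fin n × Fin n => p.1 < p.2 ∧ ¬(σ p.1 < σ p.2 ↔ τ p.1 < τ p.2))).card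

noncomputable def kendallTau {n : ℕ} (σ τ : Equiv.Perm (Fin n)) : ℝ :=
  ((concordant σ τ : ℝ) - (discordant σ τ : ℝ)) / (n.choose 2 : ℝ)

lemma card_lt_pairs (n : ℕ) :
    (Finset.univ.filter (fun p : Fin n × Fin n => p.1 < p.2)).card = n.choose 2 := by
  have h : (Finset.univ.filter (fun p : Fin n × Fin n => p.1 < p.2)) =
      Finset.univ.biUnion (fun b : Fin n => (Finset.Iio b) ×ˢ {b}) := by
    ext p
    simp only [Finset.mem_filter, Finset.mem_univ, true_and, Finset.mem_biUnion,
      Finset.mem_product, Finset.mem_Iio, Finset.mem_singleton]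
    constructor
    · exact fun h => ⟨p.2, h, rfl⟩
    · rintro ⟨b, h1, h2⟩; rw [h2]; exact h1
  rw [h, Finset.card_biUnion]
  · simp only [Finset.card_product, Finset.card_singleton, Fin.card_Iio, mul_one]
    have := Fin.sum_univ_eq_sum_range (fun k => k) n
    rw [this, Finset.sum_range_id, Nat.choose_two_right]
  · intro a _ b _ hab
    simp only [Finset.disjoint_left, Finset.mem_product, Finset.mem_singleton]
    rintro p ⟨_, rfl⟩ ⟨_, h⟩
    exact hab h

lemma discordant_id_swap_set {n : ℕ} (i j : Fin n) (hij : i < j) :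
    (Finset.univ.filter
      (fun p : Fin n × Fin n => p.1 < p.2 ∧
        ¬(p.1 < p.2 ↔ Equiv.swap i j p.1 < Equiv.swap i j p.2))) =
      ({i} ×ˢ Finset.Ioc i j) ∪ (Finset.Ico i j ×ˢ {j}) := by
  ext p
  obtain ⟨a, b⟩ := p
  rw [Finset.mem_filter]
  simp only [Finset.mem_filter, Finset.mem_univ, true_and, Finset.mem_union,
    Finset.mem_product, Finset.mem_singleton, Finset.mem_Ioc, Finset.mem_Ico,
    Equiv.swap_apply_def]
  have hij' : (i : ℕ) < (j : ℕ) := hij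
  simp only [Fin.ext_iff] at *
  split_ifs with h1 h2 h3 h4 h5 h6 h7 h8 <;> omega

theorem kendallTau_id_swap {n : ℕ} (i j : Fin n) (hij : i < j) :
    kendallTau (1 : Equiv.Perm (Fin n)) (Equiv.swap i j) =
      ((n.choose 2 : ℝ) - ((2 * (2 * ((j : ℕ) - (i : ℕ)) - 1) : ℕ) : ℝ)) /
        (n.choose 2 : ℝ) := by
  have hij' : (i : ℕ) < (j : ℕ) := hij
  -- discordant count
  have hD : discordant (1 : Equiv.Perm (Fin n)) (Equiv.swap i j) =
      2 * ((j : ℕ) - (i : ℕ)) - 1 := by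
    rw [discordant]
    simp only [Equiv.Perm.one_apply]
    erw [discordant_id_swap_set i j hij]
    have hinter : (({i} ×ˢ Finset.Ioc i j) ∩ (Finset.Ico i j ×ˢ {j})) = {(i, j)} := by
      ext p
      obtain ⟨a, b⟩ := p
      simp only [Finset.mem_inter, Finset.mem_product, Finset.mem_singleton,
        Finset.mem_Ioc, Finset.mem_Ico, Prod.mk.injEq, Fin.ext_iff, Fin.lt_def,
        Fin.le_def] at *
      omega
    have := Finset.card_union_add_card_inter ({i} ×ˢ Finset.Ioc i j)
      (Finset.Ico i j ×ˢ {j})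
    rw [hinter] at this
    simp only [Finset.card_product, Finset.card_singleton, Fin.card_Ioc,
      Fin.card_Ico, one_mul, mul_one] at this
    omega
  -- concordant + discordant = total
  have hsum : concordant (1 : Equiv.Perm (Fin n)) (Equiv.swap i j) +
      discordant (1 : Equiv.Perm (Fin n)) (Equiv.swap i j) = n.choose 2 := by
    rw [concordant, discordant, ← card_lt_pairs n, ← Finset.filter_filter,
      ← Finset.filter_filter]
    exact Finset.card_filter_add_card_filter_not _
  rw [kendallTau]
  congr 1
  have hle : discordant (1 : Equiv.Perm (Fin n)) (Equiv.swap i j) ≤ n.choose 2 := by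
    omega
  have hC : concordant (1 : Equiv.Perm (Fin n)) (Equiv.swap i j) =
      n.choose 2 - discordant (1 : Equiv.Perm (Fin n)) (Equiv.swap i j) := by omega
  rw [hC, hD, Nat.cast_sub (by omega)]
  push_cast [hD]
  have h1 : 1 ≤ 2 * ((j : ℕ) - (i : ℕ)) := by omega
  rw [Nat.cast_sub h1]
  push_cast
  ring
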